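/- Let ω, Ω ⊂ ℝ² be two planar domains with ω ⊆ Ω. Set r = 1/h(ω) and R = 1/h(Ω), and assume that the inner Cheeger formula holds for both: |ω^r| = π r² and |Ω^R| = π R². Then 0 ≤ R − r ≤ |Ω^r \ ω^r| / (2π r). -/

import Mathlib

open MeasureTheory Metric Set ENNReal

/-- Divergence of a vector field on `ℝ²`. -/
noncomputable def vdiv (φ : EuclideanSpace ℝ (Fin 2) → EuclideanSpace ℝ (Fin 2))
    (x : EuclideanSpace ℝ (Fin 2)) : ℝ :=
  ∑ i : Fin 2, fderiv ℝ φ x (EuclideanSpace.single i 1) i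

/-- Relative (distributional) perimeter of `E` in the open set `A`. -/
noncomputable def perimeterIn (E A : Set (EuclideanSpace ℝ (Fin 2))) : ℝ≥0∞ :=
  ⨆ (φ : EuclideanSpace ℝ (Fin 2) → EuclideanSpace ℝ (Fin 2)) (_ : ContDiff ℝ 1 φ)
    (_ : HasCompactSupport φ) (_ : tsupport φ ⊆ A) (_ : ∀ x, ‖φ x‖ ≤ 1),
    ENNReal.ofReal (∫ x in E, vdiv φ x)

noncomputable def perimeter (E : Set (EuclideanSpace ℝ (Fin 2))) : ℝ≥0∞ :=
  perimeterIn E Set.univ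

noncomputable def cheegerConst (Ω : Set (EuclideanSpace ℝ (Fin 2))) : ℝ≥0∞ :=
  ⨅ (F : Set (EuclideanSpace ℝ (Fin 2))) (_ : MeasurableSet F) (_ : F ⊆ Ω)
    (_ : 0 < volume F), perimeter F / volume F

/-- The inner parallel set `Ω^r = {x ∈ Ω : dist(x, ∂Ω) ≥ r}`. -/
def innerPar (Ω : Set (EuclideanSpace ℝ (Fin 2))) (r : ℝ) : Set (EuclideanSpace ℝ (Fin 2)) :=
  {x ∈ Ω | r ≤ Metric.infDist x (frontier Ω)}

/-!
Shrinking the domain raises the Cheeger constant, so `r ≤ R` and hence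
`Ω^R ⊆ Ω^r ⊆ ω^r ∪ (Ω^r \ ω^r)`. Taking measures with the inner Cheeger formula
gives `π (R² - r²) ≤ |Ω^r \ ω^r|`, and `R² - r² = (R - r)(R + r) ≥ 2 r (R - r)`.
-/

theorem cheegerConst_anti {ω Ω : Set (EuclideanSpace ℝ (Fin 2))} (hsub : ω ⊆ Ω) :
    cheegerConst Ω ≤ cheegerConst ω :=
  iInf_mono fun _ => iInf_mono fun _ =>
    iInf_mono' fun hFω => ⟨hFω.trans hsub, le_rfl⟩

theorem le_of_cheegerConst_inv {ω Ω : Set (EuclideanSpace ℝ (Fin 2))} (hsub : ω ⊆ Ω)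
    {r R : ℝ} (hr0 : 0 < r) (hr : ENNReal.ofReal r = (cheegerConst ω)⁻¹)
    (hR : ENNReal.ofReal R = (cheegerConst Ω)⁻¹) : r ≤ R := by
  have h : ENNReal.ofReal r ≤ ENNReal.ofReal R := by
    rw [hr, hR]
    exact ENNReal.inv_le_inv' (cheegerConst_anti hsub)
  exact (ENNReal.ofReal_le_ofReal_iff'.1 h).resolve_right hr0.not_ge

theorem innerPar_anti (Ω : Set (EuclideanSpace ℝ (Fin 2))) {r R : ℝ} (hrR : r ≤ R) :
    innerPar Ω R ⊆ innerPar Ω r := fun _ ⟨hx, hxR⟩ => ⟨hx, hrR.trans hxR⟩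

theorem sub_le_div_of_sq_le {c d r R : ℝ} (hc : 0 < c) (hr : 0 < r) (hrR : r ≤ R)
    (h : c * R ^ 2 ≤ d + c * r ^ 2) : R - r ≤ d / (2 * c * r) := by
  rw [le_div_iff₀ (by positivity)]
  nlinarith [mul_nonneg hc.le (mul_nonneg (sub_nonneg.2 hrR) (sub_nonneg.2 hrR))]

theorem inner_cheeger_error_estimate_general (ω Ω : Set (EuclideanSpace ℝ (Fin 2)))
    (hΩb : Bornology.IsBounded Ω)
    (hsub : ω ⊆ Ω) (r R : ℝ) (hr0 : 0 < r)
    (hr : ENNReal.ofReal r = (cheegerConst ω)⁻¹)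
    (hR : ENNReal.ofReal R = (cheegerConst Ω)⁻¹)
    (hif1 : volume (innerPar ω r) = ENNReal.ofReal (Real.pi * r ^ 2))
    (hif2 : volume (innerPar Ω R) = ENNReal.ofReal (Real.pi * R ^ 2)) :
    0 ≤ R - r ∧ R - r ≤ (volume (innerPar Ω r \ innerPar ω r)).toReal / (2 * Real.pi * r) := by
  have hrR := le_of_cheegerConst_inv hsub hr0 hr hR
  have hfin : volume (innerPar Ω r \ innerPar ω r) ≠ ⊤ :=
    (measure_mono fun _ hx => hx.1.1).trans_lt hΩb.measure_lt_top |>.ne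
  have hvol : volume (innerPar Ω R) ≤
      volume (innerPar Ω r \ innerPar ω r) + volume (innerPar ω r) :=
    (measure_mono (innerPar_anti Ω hrR)).trans (tsub_le_iff_right.1 le_measure_sdiff)
  rw [hif1, hif2, ← ofReal_toReal hfin, ← ENNReal.ofReal_add toReal_nonneg (by positivity),
    ENNReal.ofReal_le_ofReal_iff (by positivity)] at hvol
  exact ⟨sub_nonneg.2 hrR, sub_le_div_of_sq_le Real.pi_pos hr0 hrR hvol⟩

theorem inner_cheeger_error_estimate (ω Ω : Set (EuclideanSpace ℝ (Fin 2)))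
    (hωo : IsOpen ω) (hωb : Bornology.IsBounded ω) (hωc : IsConnected ω)
    (hΩo : IsOpen Ω) (hΩb : Bornology.IsBounded Ω) (hΩc : IsConnected Ω)
    (hsub : ω ⊆ Ω) (r R : ℝ) (hr0 : 0 < r)
    (hr : ENNReal.ofReal r = (cheegerConst ω)⁻¹)
    (hR : ENNReal.ofReal R = (cheegerConst Ω)⁻¹)
    (hif1 : volume (innerPar ω r) = ENNReal.ofReal (Real.pi * r ^ 2))
    (hif2 : volume (innerPar Ω R) = ENNReal.ofReal (Real.pi * R ^ 2)) :
    0 ≤ R - r ∧ R - r ≤ (volume (innerPar Ω r \ innerPar ω r)).toReal / (2 * Real.pi * r) :=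
  inner_cheeger_error_estimate_general ω Ω hΩb hsub r R hr0 hr hR hif1 hif2
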